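/- arXiv:1601.05708 — 7 statements merged into one kernel-verified Lean document; each statement's English description precedes it below -/
import Mathlib

section
/- Let m ≥ 0 and K ≥ 1 be integers. Let M be the K×K matrix with rational entries M_{i,j} = C(m + 2(j−1), j−i) for 1 ≤ i, j ≤ K, and let N be the K×K matrix with entries N_{i,j} = (−1)^{i+j} ( C(m + i + j − 2, m + 2i − 2) + C(m + i + j − 3, m + 2i − 2) ). Then M·N equals the K×K identity matrix; in particular M is invertible and N = M^{−1}. -/
/-!
Write `A k j = (-1)^(k+j) C(m+k+j, m+2k)`. Then `N k j = A k j - A k (j-1)`, so it suffices that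
`M * A` is the upper triangular all-ones matrix. With `a = m + 2i`, `n = j - i` and `k = i + s`, the
trinomial revision `C(a+n+s, a+2s) C(a+2s, s) = C(a+n+s, n) C(n, s)` turns the entry `(M * A) i j`
into `∑ s, (-1)^(n-s) C(n, s) C(a+n+s, n)`, the `n`-th forward difference of `x ↦ C(x, n)` at
`a + n`, which is `1`.
-/

/-- Integer binomial coefficient `C(a,b)` with the convention that it is `0`
whenever `a < 0` or `b < 0` (and, via `Nat.choose`, whenever `b > a`). -/
def intChoose (a b : ℤ) : ℤ :=
  if 0 ≤ a ∧ 0 ≤ b then (Nat.choose a.toNat b.toNat : ℤ) else 0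

open Finset

lemma intChoose_natCast (a b : ℕ) : intChoose a b = a.choose b := by
  simp [intChoose]

lemma intChoose_of_neg_right (a : ℤ) {b : ℤ} (hb : b < 0) : intChoose a b = 0 := by
  simp [intChoose, hb.not_ge]

lemma intChoose_of_lt {a b : ℤ} (h : a < b) : intChoose a b = 0 := by
  unfold intChoose
  split_ifs
  · rw [Nat.choose_eq_zero_of_lt (by omega), Nat.cast_zero]
  · rfl

theorem alternating_sum_choose_mul_choose_add (n x : ℕ) :
    ∑ k ∈ range (n + 1), (-1 : ℤ) ^ (n - k) * n.choose k * (x + k).choose n = 1 := by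
  have h := fwdDiff_iter_comp_add 1 (fun y : ℕ => (y.choose (n + 0) : ℤ)) x n 0
  rw [fwdDiff_iter_choose, fwdDiff_iter_eq_sum_shift] at h
  simpa [add_comm] using h

theorem choose_mul_choose_add_two_mul {a n s : ℕ} (hs : s ≤ n) :
    (a + n + s).choose (a + 2 * s) * (a + 2 * s).choose s
      = (a + n + s).choose n * n.choose s := by
  rw [Nat.choose_mul (by omega), Nat.choose_mul hs,
    show a + 2 * s - s = a + s by omega, show a + n + s - s = a + n by omega,
    Nat.choose_symm_of_eq_add (show a + n = (a + s) + (n - s) by omega)]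

theorem sum_choose_mul_choose_add_two_mul (a n : ℕ) :
    ∑ s ∈ range (n + 1),
      (-1 : ℤ) ^ (n + s) * (a + n + s).choose (a + 2 * s) * (a + 2 * s).choose s = 1 := by
  refine Eq.trans (sum_congr rfl fun s hs => ?_) (alternating_sum_choose_mul_choose_add n (a + n))
  have hs : s ≤ n := Nat.lt_succ_iff.mp (mem_range.mp hs)
  rw [mul_assoc, ← Nat.cast_mul, choose_mul_choose_add_two_mul hs,
    show n + s = n - s + 2 * s by omega, pow_add, pow_mul, neg_one_sq, one_pow, mul_one]
  push_cast
  ring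

lemma intChoose_eq_choose {a b : ℤ} {a' b' : ℕ} (ha : a = a') (hb : b = b') :
    intChoose a b = a'.choose b' := by
  rw [ha, hb, intChoose_natCast]

theorem sum_intChoose_mul_neg_one_pow_mul_intChoose (m i j L : ℕ) (hj : j < L) :
    ∑ k ∈ range L, intChoose (m + 2 * k) (k - i) *
        ((-1) ^ (k + j) * intChoose (m + k + j) (m + 2 * k)) = if i ≤ j then 1 else 0 := by
  have hvanish : ∀ k ∈ range L, k ∉ Ico i (j + 1) → intChoose (m + 2 * k) (k - i) *
      ((-1) ^ (k + j) * intChoose (m + k + j) (m + 2 * k)) = 0 := by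
    intro k _ hk
    rw [mem_Ico, not_and, not_lt] at hk
    rcases lt_or_ge k i with hki | hik
    · rw [intChoose_of_neg_right _ (by omega), zero_mul]
    · rw [intChoose_of_lt (a := m + k + j) (by have := hk hik; omega), mul_zero, mul_zero]
  rw [← sum_subset (fun k hk => mem_range.2 (by rw [mem_Ico] at hk; omega)) hvanish,
    sum_Ico_eq_sum_range]
  split_ifs with hij
  · obtain ⟨n, rfl⟩ := Nat.exists_eq_add_of_le hij
    rw [show i + n + 1 - i = n + 1 by omega]
    refine Eq.trans (sum_congr rfl fun s _ => ?_)
      (sum_choose_mul_choose_add_two_mul (m + 2 * i) n)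
    rw [intChoose_eq_choose (a' := m + 2 * i + 2 * s) (b' := s)
        (by push_cast; ring) (by push_cast; ring),
      intChoose_eq_choose (a' := m + 2 * i + n + s) (b' := m + 2 * i + 2 * s)
        (by push_cast; ring) (by push_cast; ring),
      show i + s + (i + n) = n + s + 2 * i by omega, pow_add, pow_mul, neg_one_sq, one_pow, mul_one]
    ring
  · rw [show j + 1 - i = 0 by omega, sum_range_zero]

theorem sum_intChoose_mul_neg_one_pow_mul_intChoose_add (m i j L : ℕ) (hj : j < L) :
    ∑ k ∈ range L, intChoose (m + 2 * k) (k - i) * ((-1) ^ (k + j) *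
        (intChoose (m + k + j) (m + 2 * k) + intChoose (m + k + j - 1) (m + 2 * k)))
      = if i = j then 1 else 0 := by
  cases j with
  | zero =>
    have hterm (k : ℕ) : intChoose (m + k + (0 : ℕ) - 1) (m + 2 * k) = 0 :=
      intChoose_of_lt (by omega)
    simp_rw [hterm, add_zero (intChoose _ _)]
    rw [sum_intChoose_mul_neg_one_pow_mul_intChoose m i 0 L hj]
    simp only [Nat.le_zero]
  | succ j =>
    have hterm (k : ℕ) : (-1 : ℤ) ^ (k + (j + 1)) *
          (intChoose (m + k + (j + 1 : ℕ)) (m + 2 * k)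
            + intChoose (m + k + (j + 1 : ℕ) - 1) (m + 2 * k))
        = (-1) ^ (k + (j + 1)) * intChoose (m + k + (j + 1 : ℕ)) (m + 2 * k)
          - (-1) ^ (k + j) * intChoose (m + k + j) (m + 2 * k) := by
      rw [show (m : ℤ) + k + (j + 1 : ℕ) - 1 = m + k + j by push_cast; ring,
        ← add_assoc, pow_succ]
      ring
    simp_rw [hterm, mul_sub, sum_sub_distrib]
    rw [sum_intChoose_mul_neg_one_pow_mul_intChoose m i (j + 1) L hj,
      sum_intChoose_mul_neg_one_pow_mul_intChoose m i j L (by omega)]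
    split_ifs <;> omega

theorem binomial_matrix_inverse_general (m K : ℕ)
    (M N : Matrix (Fin K) (Fin K) ℚ)
    (hM : ∀ i j : Fin K, M i j =
      (intChoose ((m : ℤ) + 2 * (j : ℤ)) ((j : ℤ) - (i : ℤ)) : ℚ))
    (hN : ∀ i j : Fin K, N i j =
      (-1) ^ ((i : ℕ) + (j : ℕ)) *
        ((intChoose ((m : ℤ) + (i : ℤ) + (j : ℤ)) ((m : ℤ) + 2 * (i : ℤ)) : ℚ) +
         (intChoose ((m : ℤ) + (i : ℤ) + (j : ℤ) - 1) ((m : ℤ) + 2 * (i : ℤ)) : ℚ))) :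
    M * N = 1 ∧ IsUnit M ∧ N = M⁻¹ := by
  have hMN : M * N = 1 := by
    ext i j
    have h := sum_intChoose_mul_neg_one_pow_mul_intChoose_add m i j K j.isLt
    rw [Finset.sum_range] at h
    simp only [Matrix.mul_apply, hM, hN, Matrix.one_apply, Fin.ext_iff]
    exact_mod_cast h
  exact ⟨hMN, (Matrix.isUnit_iff_isUnit_det M).2 (Matrix.isUnit_det_of_right_inverse hMN),
    (Matrix.inv_eq_right_inv hMN).symm⟩

/-- Binomial matrix inversion (Proposition 3.9): with 1-based indices
`i, j ∈ {1, …, K}` (represented here by `i, j : Fin K` shifted by one),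
the matrix `M_{i,j} = C(m + 2(j−1), j−i)` satisfies `M · N = 1` where
`N_{i,j} = (−1)^{i+j} (C(m+i+j−2, m+2i−2) + C(m+i+j−3, m+2i−2))`;
in particular `M` is invertible and `N = M⁻¹`. -/
theorem binomial_matrix_inverse (m K : ℕ) (hK : 1 ≤ K)
    (M N : Matrix (Fin K) (Fin K) ℚ)
    (hM : ∀ i j : Fin K, M i j =
      (intChoose ((m : ℤ) + 2 * (j : ℤ)) ((j : ℤ) - (i : ℤ)) : ℚ))
    (hN : ∀ i j : Fin K, N i j =
      (-1) ^ ((i : ℕ) + (j : ℕ)) *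
        ((intChoose ((m : ℤ) + (i : ℤ) + (j : ℤ)) ((m : ℤ) + 2 * (i : ℤ)) : ℚ) +
         (intChoose ((m : ℤ) + (i : ℤ) + (j : ℤ) - 1) ((m : ℤ) + 2 * (i : ℤ)) : ℚ))) :
    M * N = 1 ∧ IsUnit M ∧ N = M⁻¹ :=
  binomial_matrix_inverse_general m K M N hM hN
end

section
/- For every integer i ≥ 0, the sum over all pairs of natural numbers (k, l) with k + 2l = i of (−1)^l · 2^k · C(k+l, k) equals i + 1. -/
open Finset

def T (i : ℕ) : ℤ :=
  ∑ l ∈ range (i+1), (-1 : ℤ)^l * 2^(i - 2*l) * (Nat.choose (i - l) l : ℤ)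

lemma choose_zero' {i l : ℕ} (h : i < 2*l) : Nat.choose (i - l) l = 0 :=
  Nat.choose_eq_zero_of_lt (by omega)

lemma T_ext (i N : ℕ) (h : i + 1 ≤ N) :
    T i = ∑ l ∈ range N, (-1 : ℤ)^l * 2^(i - 2*l) * (Nat.choose (i - l) l : ℤ) := by
  apply Finset.sum_subset (Finset.range_subset_range.2 h)
  intro l _ hl
  simp only [Finset.mem_range, not_lt] at hl
  rw [choose_zero' (by omega)]
  simp

lemma T_rec (n : ℕ) : T (n+2) = 2 * T (n+1) - T n := by
  have hA : (∑ l ∈ range (n+2), (-1 : ℤ)^l * 2^(n - 2*l) * (Nat.choose (n - l) l : ℤ)) = T n :=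
    (T_ext n (n+2) (by omega)).symm
  have hB : (∑ l ∈ range (n+2), (-1 : ℤ)^l * 2^(n - 2*l) * (Nat.choose (n - l) (l+1) : ℤ))
      = 2^(n+2) - 2 * T (n+1) := by
    have hlast : (∑ l ∈ range (n+2), (-1 : ℤ)^l * 2^(n - 2*l) * (Nat.choose (n - l) (l+1) : ℤ))
        = ∑ l ∈ range (n+1), (-1 : ℤ)^l * 2^(n - 2*l) * (Nat.choose (n - l) (l+1) : ℤ) := by
      rw [Finset.sum_range_succ]
      rw [Nat.choose_eq_zero_of_lt (by omega)]
      simp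
    have hT1 : T (n+1) = -(∑ l ∈ range (n+1), (-1 : ℤ)^l * 2^(n - 1 - 2*l) * (Nat.choose (n - l) (l+1) : ℤ)) + 2^(n+1) := by
      rw [T, Finset.sum_range_succ']
      rw [← Finset.sum_neg_distrib]
      congr 1
      · apply Finset.sum_congr rfl
        intro l _
        have e1 : n + 1 - 2*(l+1) = n - 1 - 2*l := by omega
        have e2 : n + 1 - (l+1) = n - l := by omega
        rw [e1, e2, pow_succ]
        ring
      · simp
    rw [hlast]
    have : (∑ l ∈ range (n+1), (-1 : ℤ)^l * 2^(n - 2*l) * (Nat.choose (n - l) (l+1) : ℤ))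
        = ∑ l ∈ range (n+1), 2 * ((-1 : ℤ)^l * 2^(n - 1 - 2*l) * (Nat.choose (n - l) (l+1) : ℤ)) := by
      apply Finset.sum_congr rfl
      intro l _
      by_cases hc : l + 1 ≤ n - l
      · have e : n - 2*l = (n - 1 - 2*l) + 1 := by omega
        rw [e, pow_succ]
        ring
      · rw [Nat.choose_eq_zero_of_lt (by omega)]
        simp
    rw [this, ← Finset.mul_sum]
    have hp2 : (2:ℤ)^(n+2) = 2 * 2^(n+1) := by ring
    linarith [hT1]
  have h0 : T (n+2) = (∑ l ∈ range (n+2), (-1 : ℤ)^(l+1) * 2^((n+2) - 2*(l+1)) * (Nat.choose ((n+2) - (l+1)) (l+1) : ℤ)) + 2^(n+2) := by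
    rw [T, Finset.sum_range_succ']
    simp
  have hsplit : (∑ l ∈ range (n+2), (-1 : ℤ)^(l+1) * 2^((n+2) - 2*(l+1)) * (Nat.choose ((n+2) - (l+1)) (l+1) : ℤ))
      = -((∑ l ∈ range (n+2), (-1 : ℤ)^l * 2^(n - 2*l) * (Nat.choose (n - l) l : ℤ))
        + (∑ l ∈ range (n+2), (-1 : ℤ)^l * 2^(n - 2*l) * (Nat.choose (n - l) (l+1) : ℤ))) := by
    rw [← Finset.sum_add_distrib, ← Finset.sum_neg_distrib]
    apply Finset.sum_congr rfl
    intro l hl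
    simp only [Finset.mem_range] at hl
    have e1 : (n+2) - 2*(l+1) = n - 2*l := by omega
    rw [e1]
    have hch : Nat.choose ((n+2) - (l+1)) (l+1) = Nat.choose (n - l) l + Nat.choose (n - l) (l+1) := by
      rcases Nat.lt_or_ge l (n+1) with h | h
      · have e2 : (n+2) - (l+1) = (n - l) + 1 := by omega
        rw [e2, Nat.choose_succ_succ]
      · have hl' : l = n + 1 := by omega
        subst hl'
        have : n - (n+1) = 0 := by omega
        rw [this]
        have : (n+2) - (n+1+1) = 0 := by omega
        rw [this]
        simp [Nat.choose_eq_zero_of_lt]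
    rw [hch]
    push_cast
    ring
  rw [h0, hsplit, hA, hB]
  ring

lemma T_val : ∀ n, T n = n + 1 ∧ T (n+1) = n + 2 := by
  intro n
  induction n with
  | zero =>
    constructor
    · simp [T]
    · simp [T, Finset.sum_range_succ]
  | succ m ih =>
    refine ⟨ih.2, ?_⟩
    rw [T_rec, ih.1, ih.2]
    push_cast
    ring

/-- For every integer `i ≥ 0`, `∑_{k+2l=i} (−1)^l 2^k C(k+l,k) = i + 1`. -/
theorem sum_u_eq (i : ℕ) :
    (∑ p ∈ (Finset.range (i + 1) ×ˢ Finset.range (i + 1)).filter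
        (fun p => p.1 + 2 * p.2 = i),
      (-1 : ℤ) ^ p.2 * 2 ^ p.1 * (Nat.choose (p.1 + p.2) p.1 : ℤ)) = i + 1 := by
  have key : (∑ p ∈ (Finset.range (i + 1) ×ˢ Finset.range (i + 1)).filter
        (fun p => p.1 + 2 * p.2 = i),
      (-1 : ℤ) ^ p.2 * 2 ^ p.1 * (Nat.choose (p.1 + p.2) p.1 : ℤ)) = T i := by
    rw [T]
    rw [← Finset.sum_filter_of_ne (p := fun l => 2 * l ≤ i)
      (by intro l hl h; by_contra hc; push_neg at hc
          exact h (by rw [choose_zero' (by omega)] at *; simp at *))]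
    apply Finset.sum_nbij' (i := fun p => p.2) (j := fun l => (i - 2*l, l))
    · intro p hp
      simp only [Finset.mem_filter, Finset.mem_product, Finset.mem_range] at hp ⊢
      omega
    · intro l hl
      simp only [Finset.mem_filter, Finset.mem_product, Finset.mem_range] at hl ⊢
      omega
    · intro p hp
      simp only [Finset.mem_filter, Finset.mem_product, Finset.mem_range] at hp
      ext <;> simp <;> omega
    · intro l hl
      rfl
    · intro p hp
      simp only [Finset.mem_filter, Finset.mem_product, Finset.mem_range] at hp
      have e1 : p.1 = i - 2 * p.2 := by omega
      have e2 : p.1 + p.2 = i - p.2 := by omega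
      rw [e2, e1]
      congr 1
      have h2 : i - 2 * p.2 = (i - p.2) - p.2 := by omega
      rw [h2]
      exact_mod_cast Nat.choose_symm (show p.2 ≤ i - p.2 by omega)
  rw [key, (T_val i).1]
end

section
/- For every integer i ≥ 1, the sum over all pairs of natural numbers (k, l) with k + 2l = i of (−1)^l · 2^k · C(k+l−1, k) equals 1 − i. -/
lemma intChoose_pascal (a b : ℤ) (ha : 1 ≤ a) :
    intChoose a b = intChoose (a-1) (b-1) + intChoose (a-1) b := by
  unfold intChoose
  rcases lt_or_ge b 0 with hb | hb
  · rw [if_neg (by omega), if_neg (by omega), if_neg (by omega)]; ring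
  rcases eq_or_lt_of_le hb with hb0 | hb1
  · rw [if_pos ⟨by omega, hb⟩, if_neg (by omega), if_pos ⟨by omega, by omega⟩]
    have h1 : b.toNat = 0 := by omega
    have h2 : (b-1+1).toNat = 0 := by omega
    simp [h1, ← hb0]
  · rw [if_pos ⟨by omega, hb⟩, if_pos ⟨by omega, by omega⟩, if_pos ⟨by omega, hb⟩]
    have h1 : a.toNat = (a-1).toNat + 1 := by omega
    have h2 : b.toNat = (b-1).toNat + 1 := by omega
    rw [h1, h2, Nat.choose_succ_succ]
    push_cast; ring

def hterm (i l : ℕ) : ℤ :=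
  if 2*l ≤ i then (-1:ℤ)^l * 2^(i-2*l) * intChoose ((i:ℤ) - l - 1) ((i:ℤ) - 2*l) else 0

lemma hterm_zero (i : ℕ) : hterm i 0 = 0 := by
  unfold hterm intChoose
  rcases Nat.eq_zero_or_pos i with rfl | hi
  · norm_num
  · rw [if_pos (by omega), if_pos ⟨by omega, by omega⟩]
    push_cast
    have : ((i:ℤ) - 0 - 1).toNat < ((i:ℤ) - 0).toNat := by omega
    rw [Nat.choose_eq_zero_of_lt this]; ring

lemma hterm_rec (i l : ℕ) (hi : 1 ≤ i) :
    hterm (i+2) (l+1) = 2 * hterm (i+1) (l+1) - hterm i l := by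
  unfold hterm
  rcases lt_or_ge i (2*l) with h | h
  · rw [if_neg (by omega), if_neg (by omega), if_neg (by omega)]; ring
  rcases eq_or_lt_of_le h with he | hlt
  · -- 2l = i, middle term has false condition, and Pascal's first term is 0
    rw [if_pos (by omega), if_neg (by omega), if_pos (by omega)]
    rw [intChoose_pascal _ _ (by omega)]
    have hz : intChoose ((i:ℤ)+2 - ((l:ℤ)+1) - 1 - 1) ((i:ℤ)+2 - 2*((l:ℤ)+1) - 1) = 0 := by
      unfold intChoose; rw [if_neg (by omega)]
    have e0 : i+2-2*(l+1) = 0 := by omega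
    have e0' : i-2*l = 0 := by omega
    rw [e0, e0']
    push_cast
    rw [hz,
        show ((i:ℤ)+2 - ((l:ℤ)+1) - 1 - 1) = (i:ℤ) - l - 1 by ring,
        show ((i:ℤ)+2 - 2*((l:ℤ)+1)) = (i:ℤ) - 2*l by ring]
    ring
  · rw [if_pos (by omega), if_pos (by omega), if_pos (by omega)]
    rw [intChoose_pascal _ _ (by omega)]
    obtain ⟨n, hn⟩ : ∃ n, i - 2*l = n + 1 := ⟨i-2*l-1, by omega⟩
    have e3 : i+2-2*(l+1) = n+1 := by omega
    have e4 : i+1-2*(l+1) = n := by omega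
    rw [e3, e4, hn]
    push_cast
    rw [show ((i:ℤ)+2 - ((l:ℤ)+1) - 1 - 1) = (i:ℤ) - l - 1 by ring,
        show ((i:ℤ)+2 - 2*((l:ℤ)+1) - 1) = (i:ℤ) - 2*l - 1 by ring,
        show ((i:ℤ)+2 - 2*((l:ℤ)+1)) = (i:ℤ) - 2*l by ring,
        show ((i:ℤ)+1 - ((l:ℤ)+1) - 1) = (i:ℤ) - l - 1 by ring,
        show ((i:ℤ)+1 - 2*((l:ℤ)+1)) = (i:ℤ) - 2*l - 1 by ring]
    ring

lemma sum_eq_hterm (i : ℕ) :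
    (∑ p ∈ (Finset.range (i + 1) ×ˢ Finset.range (i + 1)).filter
        (fun p => p.1 + 2 * p.2 = i),
      (-1 : ℤ) ^ p.2 * 2 ^ p.1 *
        intChoose ((p.1 : ℤ) + (p.2 : ℤ) - 1) (p.1 : ℤ)) =
    ∑ l ∈ Finset.range (i+1), hterm i l := by
  rw [Finset.sum_filter, Finset.sum_product_right]
  refine Finset.sum_congr rfl (fun l hl => ?_)
  by_cases h2 : 2*l ≤ i
  · rw [Finset.sum_eq_single_of_mem (i - 2*l) (Finset.mem_range.2 (by omega))
      (fun k _ hk => if_neg (by omega))]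
    rw [if_pos (by omega)]
    unfold hterm
    rw [if_pos h2]
    simp only
    push_cast [Nat.cast_sub (by omega : 2*l ≤ i)]
    ring_nf
  · rw [Finset.sum_eq_zero (fun k _ => if_neg (by omega))]
    unfold hterm
    rw [if_neg h2]

lemma hterm_ext (i M : ℕ) (hM : i + 1 ≤ M) :
    ∑ l ∈ Finset.range M, hterm i l = ∑ l ∈ Finset.range (i+1), hterm i l := by
  symm
  apply Finset.sum_subset (Finset.range_subset_range.2 hM)
  intro l _ hl
  unfold hterm
  rw [if_neg (by simp at hl ⊢; omega)]

lemma Sh_rec (i : ℕ) (hi : 1 ≤ i) :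
    ∑ l ∈ Finset.range (i+3), hterm (i+2) l =
      2 * (∑ l ∈ Finset.range (i+2), hterm (i+1) l)
        - ∑ l ∈ Finset.range (i+1), hterm i l := by
  rw [← hterm_ext (i+2) (i+4) (by omega), ← hterm_ext (i+1) (i+4) (by omega),
      ← hterm_ext i (i+3) (by omega)]
  rw [Finset.sum_range_succ' (fun l => hterm (i+2) l) (i+3),
      Finset.sum_range_succ' (fun l => hterm (i+1) l) (i+3)]
  simp only [hterm_zero, add_zero]
  rw [Finset.mul_sum, ← Finset.sum_sub_distrib]
  refine Finset.sum_congr rfl (fun l _ => ?_)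
  rw [hterm_rec i l hi]

lemma Sh_val (i : ℕ) :
    ∑ l ∈ Finset.range (i+2), hterm (i+1) l = -(i:ℤ) := by
  induction i using Nat.twoStepInduction with
  | zero =>
    norm_num [Finset.sum_range_succ, hterm, intChoose]
  | one =>
    norm_num [Finset.sum_range_succ, hterm, intChoose]
    decide
  | more n ih1 ih2 =>
    show ∑ l ∈ Finset.range (n+1+3), hterm (n+1+2) l = _
    rw [Sh_rec (n+1) (by omega)]
    have ih1' : ∑ l ∈ Finset.range (n+1+1), hterm (n+1) l = -(n:ℤ) := ih1
    rw [ih2, ih1']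
    push_cast; ring

/-- For every integer `i ≥ 1`, `∑_{k+2l=i} (−1)^l 2^k C(k+l−1,k) = 1 − i`. -/
theorem sum_shifted_eq (i : ℕ) (hi : 1 ≤ i) :
    (∑ p ∈ (Finset.range (i + 1) ×ˢ Finset.range (i + 1)).filter
        (fun p => p.1 + 2 * p.2 = i),
      (-1 : ℤ) ^ p.2 * 2 ^ p.1 *
        intChoose ((p.1 : ℤ) + (p.2 : ℤ) - 1) (p.1 : ℤ)) = 1 - i := by
  obtain ⟨j, rfl⟩ : ∃ j, i = j + 1 := ⟨i - 1, by omega⟩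
  rw [sum_eq_hterm]
  rw [show j+1+1 = j+2 from rfl, Sh_val j]
  push_cast; ring
end

section
/- Let a : ℕ → ℤ be any function and let i be a natural number. Then Σ_{(k,l)∈ℕ², k+2l ≤ i} (−1)^l · 2^k · ( C(k+l, k) + C(k+l−1, k) ) · a(i − k − 2l) = a(i) + 2 · Σ_{j=1}^{i} a(i − j). (For the pair (k,l) = (0,0) the coefficient C(k+l−1,k) = C(−1,0) is 0, so that the (0,0)-term contributes exactly a(i).) -/
open Finset

def F (m : ℕ) : ℤ := ∑ l ∈ range (m+1), (-1:ℤ)^l * 2^(m-2*l) * ((m-l).choose l : ℤ)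

lemma F0 : F 0 = 1 := by simp [F]
lemma F1 : F 1 = 2 := by simp [F, Finset.sum_range_succ]

lemma Frec (m : ℕ) : F (m+2) = 2 * F (m+1) - F m := by
  have hpeel : F (m+2) = 2^(m+2)
      - ∑ l ∈ range (m+2), (-1:ℤ)^l * 2^(m-2*l) * ((m+1-l).choose (l+1) : ℤ) := by
    rw [F, Finset.sum_range_succ']
    have h : ∀ l, (-1:ℤ)^(l+1) * 2^(m+2-2*(l+1)) * (((m+2)-(l+1)).choose (l+1) : ℤ)
        = -((-1:ℤ)^l * 2^(m-2*l) * ((m+1-l).choose (l+1) : ℤ)) := by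
      intro l
      have h1 : m+2-2*(l+1) = m-2*l := by omega
      have h2 : m+2-(l+1) = m+1-l := by omega
      rw [h1, h2]; ring
    simp only [h, Finset.sum_neg_distrib]
    simp
    ring
  -- Pascal split
  have hpascal : ∀ l ∈ range (m+2), ((m+1-l).choose (l+1) : ℤ)
      = ((m-l).choose l : ℤ) + ((m-l).choose (l+1) : ℤ) := by
    intro l hl
    rcases Nat.lt_or_ge l (m+1) with h | h
    · have h2 : m+1-l = (m-l)+1 := by omega
      rw [h2, Nat.choose_succ_succ]
      push_cast; ring
    · have hl' : l = m+1 := by simp at hl; omega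
      subst hl'
      simp [Nat.choose_eq_zero_of_lt]
  have hsplit : ∑ l ∈ range (m+2), (-1:ℤ)^l * 2^(m-2*l) * ((m+1-l).choose (l+1) : ℤ)
      = (∑ l ∈ range (m+2), (-1:ℤ)^l * 2^(m-2*l) * ((m-l).choose l : ℤ))
        + ∑ l ∈ range (m+2), (-1:ℤ)^l * 2^(m-2*l) * ((m-l).choose (l+1) : ℤ) := by
    rw [← Finset.sum_add_distrib]
    refine Finset.sum_congr rfl fun l hl => ?_
    rw [hpascal l hl]; ring
  -- first sum = F m (extra top term vanishes)
  have hFm : ∑ l ∈ range (m+2), (-1:ℤ)^l * 2^(m-2*l) * ((m-l).choose l : ℤ) = F m := by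
    rw [F, Finset.sum_range_succ]
    have : (m - (m+1)).choose (m+1) = 0 := by
      have : m - (m+1) = 0 := by omega
      rw [this]; exact Nat.choose_eq_zero_of_lt (by omega)
    rw [this]
    push_cast; ring
  -- second sum = 2^(m+2) - 2 * F (m+1)
  have hG : ∑ l ∈ range (m+2), (-1:ℤ)^l * 2^(m-2*l) * ((m-l).choose (l+1) : ℤ)
      = 2^(m+2) - 2 * F (m+1) := by
    have hpeel2 : F (m+1) = 2^(m+1)
        - ∑ l ∈ range (m+1), (-1:ℤ)^l * 2^(m-1-2*l) * ((m-l).choose (l+1) : ℤ) := by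
      rw [F, Finset.sum_range_succ']
      have h : ∀ l, (-1:ℤ)^(l+1) * 2^(m+1-2*(l+1)) * (((m+1)-(l+1)).choose (l+1) : ℤ)
          = -((-1:ℤ)^l * 2^(m-1-2*l) * ((m-l).choose (l+1) : ℤ)) := by
        intro l
        have h1 : m+1-2*(l+1) = m-1-2*l := by omega
        have h2 : m+1-(l+1) = m-l := by omega
        rw [h1, h2]; ring
      simp only [h, Finset.sum_neg_distrib]
      simp
      ring
    -- relate termwise: 2^(m-2l) * C = 2 * 2^(m-1-2l) * C, with C = 0 when 2l ≥ m
    have hterm : ∀ l ∈ range (m+2), (-1:ℤ)^l * 2^(m-2*l) * ((m-l).choose (l+1) : ℤ)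
        = 2 * ((-1:ℤ)^l * 2^(m-1-2*l) * ((m-l).choose (l+1) : ℤ)) := by
      intro l _
      rcases Nat.lt_or_ge (2*l) m with h | h
      · have h1 : m-2*l = (m-1-2*l)+1 := by omega
        rw [h1, pow_succ]; ring
      · have : (m-l).choose (l+1) = 0 := Nat.choose_eq_zero_of_lt (by omega)
        rw [this]; push_cast; ring
    rw [Finset.sum_congr rfl hterm, ← Finset.mul_sum]
    rw [Finset.sum_range_succ]
    have : (m - (m+1)).choose (m+2) = 0 := Nat.choose_eq_zero_of_lt (by omega)
    rw [this]
    have : (∑ l ∈ range (m+1), (-1:ℤ)^l * 2^(m-1-2*l) * ((m-l).choose (l+1) : ℤ))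
        = 2^(m+1) - F (m+1) := by omega
    rw [this]
    push_cast
    ring
  rw [hpeel, hsplit, hFm, hG]
  ring

lemma Fval (m : ℕ) : F m = (m : ℤ) + 1 := by
  induction m using Nat.strong_induction_on with
  | _ m ih =>
    match m with
    | 0 => rw [F0]; norm_num
    | 1 => rw [F1]; norm_num
    | (n+2) =>
      rw [Frec, ih (n+1) (by omega), ih n (by omega)]
      push_cast; ring

lemma F_half (m : ℕ) :
    (∑ l ∈ range (m/2+1), (-1:ℤ)^l * 2^(m-2*l) * ((m-l).choose l : ℤ)) = F m := by
  rw [F]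
  refine Finset.sum_subset ?_ ?_
  · intro l hl; simp only [Finset.mem_range] at *; omega
  · intro l _ hl
    simp only [Finset.mem_range] at hl
    have : (m-l).choose l = 0 := Nat.choose_eq_zero_of_lt (by omega)
    rw [this]; push_cast; ring

lemma intChoose_natCast_s5 (n k : ℕ) : intChoose (n : ℤ) (k : ℤ) = (n.choose k : ℤ) := by
  simp [intChoose]

lemma intChoose_natCast_sub_one (n k : ℕ) (hn : 1 ≤ n) :
    intChoose ((n : ℤ) - 1) (k : ℤ) = ((n-1).choose k : ℤ) := by
  have : ((n : ℤ) - 1) = ((n - 1 : ℕ) : ℤ) := by omega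
  rw [this, intChoose_natCast_s5]

/-- The coefficient of `a (i - m)` after grouping by `m = k + 2l`. -/
def cS (m : ℕ) : ℤ :=
  ∑ l ∈ range (m/2+1), (-1:ℤ)^l * 2^(m-2*l) *
    (intChoose (((m-2*l : ℕ) : ℤ) + (l : ℤ)) ((m-2*l : ℕ) : ℤ) +
     intChoose (((m-2*l : ℕ) : ℤ) + (l : ℤ) - 1) ((m-2*l : ℕ) : ℤ))

lemma cS_zero : cS 0 = 1 := by
  simp [cS, intChoose]

lemma cS_pos (m : ℕ) (hm : 1 ≤ m) : cS m = 2 := by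
  have hconv : cS m = (∑ l ∈ range (m/2+1), (-1:ℤ)^l * 2^(m-2*l) * ((m-l).choose l : ℤ))
      + ∑ l ∈ range (m/2+1), (-1:ℤ)^l * 2^(m-2*l) *
          (if l = 0 then 0 else ((m-l-1).choose (l-1) : ℤ)) := by
    rw [cS, ← Finset.sum_add_distrib]
    refine Finset.sum_congr rfl fun l hl => ?_
    have h2l : 2*l ≤ m := by
      simp only [Finset.mem_range] at hl; omega
    have e1 : intChoose (((m-2*l : ℕ) : ℤ) + (l : ℤ)) ((m-2*l : ℕ) : ℤ)
        = ((m-l).choose l : ℤ) := by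
      have : ((m-2*l : ℕ) : ℤ) + (l : ℤ) = ((m-l : ℕ) : ℤ) := by omega
      rw [this, intChoose_natCast_s5]
      congr 1
      have : (m-l) - l = m - 2*l := by omega
      rw [← this, Nat.choose_symm (by omega)]
    have e2 : intChoose (((m-2*l : ℕ) : ℤ) + (l : ℤ) - 1) ((m-2*l : ℕ) : ℤ)
        = (if l = 0 then 0 else ((m-l-1).choose (l-1) : ℤ)) := by
      rcases Nat.eq_zero_or_pos l with h0 | h0
      · subst h0
        simp only [if_pos rfl, Nat.mul_zero, Nat.sub_zero, Nat.cast_zero, add_zero]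
        rw [intChoose_natCast_sub_one m m hm]
        simp [Nat.choose_eq_zero_of_lt (show m-1 < m by omega)]
      · rw [if_neg (by omega)]
        have : ((m-2*l : ℕ) : ℤ) + (l : ℤ) - 1 = ((m-l-1 : ℕ) : ℤ) := by omega
        rw [this, intChoose_natCast_s5]
        congr 1
        have : (m-l-1) - (l-1) = m - 2*l := by omega
        rw [← this, Nat.choose_symm (by omega)]
    rw [e1, e2, mul_add]
  -- first sum equals F m
  have hA := F_half m
  -- second sum
  have hB : (∑ l ∈ range (m/2+1), (-1:ℤ)^l * 2^(m-2*l) *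
      (if l = 0 then 0 else ((m-l-1).choose (l-1) : ℤ)))
      = if m = 1 then 0 else -F (m-2) := by
    rw [Finset.sum_range_succ']
    norm_num
    have hterm : ∀ l, (-1:ℤ)^(l+1) * 2^(m-2*(l+1)) * ((m-(l+1)-1).choose l : ℤ)
        = -((-1:ℤ)^l * 2^((m-2)-2*l) * (((m-2)-l).choose l : ℤ)) := by
      intro l
      have h1 : m-2*(l+1) = (m-2)-2*l := by omega
      have h2 : m-(l+1)-1 = (m-2)-l := by omega
      rw [h1, h2]; ring
    simp only [hterm, Finset.sum_neg_distrib]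
    rcases Nat.eq_or_lt_of_le hm with h1 | h1
    · rw [if_pos h1.symm]
      have : m/2 = 0 := by omega
      rw [this]; simp
    · rw [if_neg (by omega)]
      congr 1
      have hhalf : m/2 = (m-2)/2+1 := by omega
      rw [hhalf, F_half]
  rw [hconv, hA, hB]
  rcases Nat.eq_or_lt_of_le hm with h1 | h1
  · rw [if_pos h1.symm, ← h1, F1]; ring
  · rw [if_neg (by omega), Fval, Fval]
    have : ((m-2 : ℕ) : ℤ) = (m : ℤ) - 2 := by omega
    rw [this]; ring

lemma cS_eq (m : ℕ) : cS m = if m = 0 then 1 else 2 := by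
  rcases Nat.eq_zero_or_pos m with h | h
  · subst h; rw [cS_zero]; simp
  · rw [cS_pos m h, if_neg (by omega)]

/-- For any `a : ℕ → ℤ` and any `i : ℕ`,
`∑_{k+2l ≤ i} (−1)^l 2^k (C(k+l,k) + C(k+l−1,k)) a(i−k−2l) = a(i) + 2 ∑_{j=1}^{i} a(i−j)`. -/
theorem sum_expansion_eq (a : ℕ → ℤ) (i : ℕ) :
    (∑ p ∈ (Finset.range (i + 1) ×ˢ Finset.range (i + 1)).filter
        (fun p => p.1 + 2 * p.2 ≤ i),
      (-1 : ℤ) ^ p.2 * 2 ^ p.1 *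
        (intChoose ((p.1 : ℤ) + (p.2 : ℤ)) (p.1 : ℤ) +
         intChoose ((p.1 : ℤ) + (p.2 : ℤ) - 1) (p.1 : ℤ)) *
        a (i - p.1 - 2 * p.2)) =
      a i + 2 * ∑ j ∈ Finset.Icc 1 i, a (i - j) := by
  have hbij :
      (∑ p ∈ (Finset.range (i + 1) ×ˢ Finset.range (i + 1)).filter
          (fun p => p.1 + 2 * p.2 ≤ i),
        (-1 : ℤ) ^ p.2 * 2 ^ p.1 *
          (intChoose ((p.1 : ℤ) + (p.2 : ℤ)) (p.1 : ℤ) +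
           intChoose ((p.1 : ℤ) + (p.2 : ℤ) - 1) (p.1 : ℤ)) *
          a (i - p.1 - 2 * p.2))
      = ∑ q ∈ (Finset.range (i + 1) ×ˢ Finset.range (i + 1)).filter
          (fun q => 2 * q.2 ≤ q.1),
        (-1 : ℤ) ^ q.2 * 2 ^ (q.1 - 2 * q.2) *
          (intChoose (((q.1 - 2 * q.2 : ℕ) : ℤ) + (q.2 : ℤ)) ((q.1 - 2 * q.2 : ℕ) : ℤ) +
           intChoose (((q.1 - 2 * q.2 : ℕ) : ℤ) + (q.2 : ℤ) - 1) ((q.1 - 2 * q.2 : ℕ) : ℤ)) *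
          a (i - q.1) := by
    refine Finset.sum_nbij' (fun p => (p.1 + 2 * p.2, p.2)) (fun q => (q.1 - 2 * q.2, q.2))
      ?_ ?_ ?_ ?_ ?_
    · intro p hp
      simp only [Finset.mem_filter, Finset.mem_product, Finset.mem_range] at *
      omega
    · intro q hq
      simp only [Finset.mem_filter, Finset.mem_product, Finset.mem_range] at *
      omega
    · intro p hp
      simp only [Finset.mem_filter, Finset.mem_product, Finset.mem_range] at hp
      ext <;> simp <;> omega
    · intro q hq
      simp only [Finset.mem_filter, Finset.mem_product, Finset.mem_range] at hq
      ext <;> simp <;> omega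
    · intro p hp
      simp only [Finset.mem_filter, Finset.mem_product, Finset.mem_range] at hp
      have e1 : p.1 + 2 * p.2 - 2 * p.2 = p.1 := by omega
      have e2 : i - (p.1 + 2 * p.2) = i - p.1 - 2 * p.2 := by omega
      simp only [e1, e2]
  rw [hbij, Finset.sum_filter, Finset.sum_product]
  have hinner : ∀ m ∈ Finset.range (i + 1),
      (∑ l ∈ Finset.range (i + 1), if 2 * l ≤ m then
        (-1 : ℤ) ^ l * 2 ^ (m - 2 * l) *
          (intChoose (((m - 2 * l : ℕ) : ℤ) + (l : ℤ)) ((m - 2 * l : ℕ) : ℤ) +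
           intChoose (((m - 2 * l : ℕ) : ℤ) + (l : ℤ) - 1) ((m - 2 * l : ℕ) : ℤ)) *
          a (i - m) else 0)
      = cS m * a (i - m) := by
    intro m hm
    simp only [Finset.mem_range] at hm
    rw [← Finset.sum_filter]
    have hset : (Finset.range (i + 1)).filter (fun l => 2 * l ≤ m)
        = Finset.range (m / 2 + 1) := by
      ext l
      simp only [Finset.mem_filter, Finset.mem_range]
      omega
    rw [hset, cS, Finset.sum_mul]
  rw [Finset.sum_congr rfl hinner, Finset.sum_range_succ']
  have h0 : cS 0 * a (i - 0) = a i := by rw [cS_zero]; simp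
  rw [h0]
  have h2 : ∀ m ∈ Finset.range i, cS (m + 1) * a (i - (m + 1)) = 2 * a (i - (m + 1)) := by
    intro m _
    rw [cS_pos (m + 1) (by omega)]
  rw [Finset.sum_congr rfl h2]
  have h3 : (∑ j ∈ Finset.Icc 1 i, a (i - j)) = ∑ m ∈ Finset.range i, a (i - (m + 1)) := by
    refine Finset.sum_nbij' (fun j => j - 1) (fun m => m + 1) ?_ ?_ ?_ ?_ ?_
    · intro j hj; simp only [Finset.mem_Icc, Finset.mem_range] at *; omega
    · intro m hm; simp only [Finset.mem_Icc, Finset.mem_range] at *; omega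
    · intro j hj; simp only [Finset.mem_Icc] at hj; omega
    · intro m hm; omega
    · intro j hj
      simp only [Finset.mem_Icc] at hj
      congr 1
      omega
  rw [h3, Finset.mul_sum]
  ring
end

section
/- For all integers m ≥ 0 and I ≥ 1, Σ_{k=0}^{I} (−1)^k · C(m+I+k−1, m+I−1) · C(m+I−1, m+k) = (−1)^{I+1} = −(−1)^I. -/
/-!
Since `(-1)^k C(n+k, n)` is the generalized binomial coefficient `C(-(n+1), k)`, the
Chu–Vandermonde identity for `-(n+1) + n = -1` gives
`∑_k (-1)^k C(n+k, n) C(n, i-k) = C(-1, i) = (-1)^i`. With `n = m + I - 1`, `i = I - 1` and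
`C(n, m+k) = C(n, i-k)` this is the identity; the term `k = I` vanishes.
-/

open Finset

theorem Ring.choose_neg_natCast_succ (n k : ℕ) :
    Ring.choose (-(n + 1 : ℤ)) k = (-1) ^ k * ((n + k).choose n : ℤ) := by
  rw [Ring.choose_neg, show (n + 1 + k - 1 : ℤ) = ((n + k : ℕ) : ℤ) by push_cast; ring,
    Ring.choose_natCast, Nat.choose_symm_add, Units.smul_def, Int.coe_negOnePow_natCast,
    smul_eq_mul]

theorem Ring.choose_neg_one (k : ℕ) : Ring.choose (-1 : ℤ) k = (-1) ^ k := by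
  simpa using Ring.choose_neg_natCast_succ 0 k

theorem sum_range_neg_one_pow_mul_add_choose_mul_choose_sub (n i : ℕ) :
    ∑ k ∈ range (i + 1), (-1 : ℤ) ^ k * ((n + k).choose n : ℤ) * (n.choose (i - k) : ℤ) =
      (-1) ^ i := by
  have vandermonde := Ring.add_choose_eq i (Commute.all (-(n + 1 : ℤ)) n)
  rw [show -(n + 1 : ℤ) + n = -1 by ring, Ring.choose_neg_one,
    Nat.sum_antidiagonal_eq_sum_range_succ
      (fun a b => Ring.choose (-(n + 1 : ℤ)) a * Ring.choose (n : ℤ) b)] at vandermonde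
  simp only [Ring.choose_neg_natCast_succ, Ring.choose_natCast] at vandermonde
  exact vandermonde.symm

/-- For all integers `m ≥ 0` and `I ≥ 1`,
`∑_{k=0}^{I} (−1)^k C(m+I+k−1, m+I−1) C(m+I−1, m+k) = (−1)^{I+1} = −(−1)^I`. -/
theorem alternating_binomial_identity_shifted (m I : ℕ) (hI : 1 ≤ I) :
    (∑ k ∈ Finset.range (I + 1),
      (-1 : ℤ) ^ k * (Nat.choose (m + I + k - 1) (m + I - 1) : ℤ) *
        (Nat.choose (m + I - 1) (m + k) : ℤ)) = (-1 : ℤ) ^ (I + 1) ∧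
    ((-1 : ℤ) ^ (I + 1) = -(-1 : ℤ) ^ I) := by
  obtain ⟨i, rfl⟩ := Nat.exists_eq_add_of_le' hI
  have sign_flip : (-1 : ℤ) ^ (i + 1 + 1) = -(-1) ^ (i + 1) := by ring
  refine ⟨?_, sign_flip⟩
  have last_term_vanishes : (m + i).choose (m + (i + 1)) = 0 :=
    Nat.choose_eq_zero_of_lt (by omega)
  rw [sign_flip, pow_succ, mul_neg_one, neg_neg, sum_range_succ, Nat.add_succ_sub_one,
    last_term_vanishes, Nat.cast_zero, mul_zero, add_zero,
    ← sum_range_neg_one_pow_mul_add_choose_mul_choose_sub (m + i) i]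
  refine sum_congr rfl fun k hk => ?_
  have hki : k ≤ i := Nat.lt_succ_iff.mp (mem_range.mp hk)
  rw [show m + (i + 1) + k - 1 = m + i + k by omega,
    Nat.choose_symm_of_eq_add (show m + i = (m + k) + (i - k) by omega)]
end

section
/- Let V be a vector space over ℚ equipped with a symmetric bilinear form B, let s ∈ V satisfy B(s,s) = −2, and let τ_X, τ_Y : V → V be linear maps such that: B(τ_Y v, τ_Y w) = B(v,w) for all v, w ∈ V; τ_Y(s) = s; τ_X(s) = −s; and τ_X(v) = τ_Y(v) for every v ∈ V with B(v,s) = 0. Then: (i) every γ ∈ V with τ_Y(γ) = −γ satisfies B(γ,s) = 0; and (ii) the subspace {γ ∈ V : τ_X(γ) = −γ} is the internal direct sum of the subspace {γ ∈ V : τ_Y(γ) = −γ} and the line ℚ·s (i.e. these two subspaces intersect trivially and their sum is {γ : τ_X(γ) = −γ}). -/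
/-- Linear-algebra content of Lemma 2.6: if `B` is a symmetric bilinear form on a
`ℚ`-vector space `V`, `s ∈ V` satisfies `B(s,s) = −2`, and `τX, τY` are linear maps
with `τY` preserving `B`, `τY s = s`, `τX s = −s`, and `τX = τY` on `s^⊥`, then every
`τY`-anti-invariant vector is orthogonal to `s`, and the `τX`-anti-invariant subspace
is the internal direct sum of the `τY`-anti-invariant subspace and the line `ℚ·s`. -/
theorem anti_invariant_decomposition
    {V : Type*} [AddCommGroup V] [Module ℚ V]
    (B : LinearMap.BilinForm ℚ V) (hBsymm : ∀ v w : V, B v w = B w v)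
    (s : V) (hs : B s s = -2)
    (τX τY : V →ₗ[ℚ] V)
    (hτY : ∀ v w : V, B (τY v) (τY w) = B v w)
    (hYs : τY s = s) (hXs : τX s = -s)
    (hagree : ∀ v : V, B v s = 0 → τX v = τY v) :
    (∀ γ : V, τY γ = -γ → B γ s = 0) ∧
    (LinearMap.ker (τY + LinearMap.id) ⊓ Submodule.span ℚ {s} = ⊥) ∧
    (LinearMap.ker (τY + LinearMap.id) ⊔ Submodule.span ℚ {s}
      = LinearMap.ker (τX + LinearMap.id)) := by
  have hs0 : s ≠ 0 := by
    intro h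
    rw [h] at hs
    simp at hs
  have perp : ∀ γ : V, τY γ = -γ → B γ s = 0 := by
    intro γ hγ
    have := hτY γ s
    rw [hγ, hYs] at this
    simp at this
    linarith
  have kerY : ∀ γ : V, γ ∈ LinearMap.ker (τY + LinearMap.id) ↔ τY γ = -γ := by
    intro γ
    simp [LinearMap.mem_ker, add_eq_zero_iff_eq_neg]
  have kerX : ∀ γ : V, γ ∈ LinearMap.ker (τX + LinearMap.id) ↔ τX γ = -γ := by
    intro γ
    simp [LinearMap.mem_ker, add_eq_zero_iff_eq_neg]
  refine ⟨perp, ?_, ?_⟩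
  · rw [eq_bot_iff]
    intro γ hm
    rw [Submodule.mem_inf] at hm
    obtain ⟨h1, h2⟩ := hm
    rw [Submodule.mem_span_singleton] at h2
    obtain ⟨c, rfl⟩ := h2
    rw [kerY] at h1
    rw [map_smul, hYs] at h1
    have : (2 * c) • s = 0 := by
      rw [two_mul, add_smul]
      nth_rewrite 1 [h1]
      abel
    rcases smul_eq_zero.mp this with hc | hs'
    · have : c = 0 := by linarith [hc]
      simp [this]
    · exact absurd hs' hs0
  · apply le_antisymm
    · rw [sup_le_iff]
      constructor
      · intro γ h1
        rw [kerY] at h1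
        rw [kerX]
        rw [hagree γ (perp γ h1)]
        exact h1
      · rw [Submodule.span_le]
        intro x hx
        simp at hx
        subst hx
        rw [SetLike.mem_coe, kerX]
        exact hXs
    · intro γ hγ
      rw [kerX] at hγ
      set c : ℚ := -(B γ s) / 2 with hc
      set γ' : V := γ - c • s with hγ'
      have hperp : B γ' s = 0 := by
        rw [hγ']
        simp [hc, hs]
      have hτXγ' : τX γ' = -γ' := by
        rw [hγ', map_sub, map_smul, hγ, hXs]
        module
      have hτYγ' : τY γ' = -γ' := by
        rw [← hagree γ' hperp]; exact hτXγ'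
      have : γ = γ' + c • s := by rw [hγ']; abel
      rw [this]
      exact Submodule.add_mem_sup ((kerY γ').mpr hτYγ')
        (Submodule.smul_mem _ c (Submodule.mem_span_singleton_self s))
end

section
/- Let m be a natural number and let a : ℕ → ℤ be a function with finite support (a(n) = 0 for all sufficiently large n). Define b : ℕ → ℤ by b(n) = Σ_{k≥0} C(m + 2n + 2k, k) · a(n+k) (a finite sum). Then for every n ∈ ℕ, a(n) = Σ_{k≥0} (−1)^k · ( C(m + 2n + k, m + 2n) + C(m + 2n + k − 1, m + 2n) ) · b(n+k) (again a finite sum). -/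
open Finset Finset.Nat

lemma intChoose_natCast_s10 (x y : ℕ) : intChoose (x : ℤ) (y : ℤ) = (x.choose y : ℤ) := by
  unfold intChoose
  rw [if_pos ⟨Int.natCast_nonneg x, Int.natCast_nonneg y⟩, Int.toNat_natCast, Int.toNat_natCast]

/-- `∑_{i+j=r} (-1)^i C(M+i,i) C(M+n,j)`. -/
def Tsum (M n r : ℕ) : ℤ :=
  ∑ p ∈ antidiagonal r, (-1 : ℤ) ^ p.1 * ((M + p.1).choose p.1 : ℤ) * ((M + n).choose p.2 : ℤ)

def Asum (M n s : ℕ) : ℤ :=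
  ∑ p ∈ antidiagonal s, (-1 : ℤ) ^ p.1 * ((M + 1 + p.1).choose p.1 : ℤ) * ((M + n).choose p.2 : ℤ)

lemma claim1 (M n s : ℕ) : Tsum (M + 1) n (s + 1) = Asum M n (s + 1) + Asum M n s := by
  unfold Tsum Asum
  rw [sum_antidiagonal_succ', sum_antidiagonal_succ']
  dsimp only
  conv_rhs => rw [add_assoc, ← sum_add_distrib]
  simp only [Nat.choose_zero_right]
  congr 1
  apply sum_congr rfl
  intro p _
  have hp : (M + 1 + n).choose (p.2 + 1) = (M + n).choose p.2 + (M + n).choose (p.2 + 1) := by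
    have : M + 1 + n = (M + n) + 1 := by omega
    rw [this, Nat.choose_succ_succ]
  rw [hp]
  push_cast
  ring

lemma claim2 (M n s : ℕ) : Asum M n (s + 1) + Asum M n s = Tsum M n (s + 1) := by
  unfold Tsum Asum
  rw [sum_antidiagonal_succ, sum_antidiagonal_succ]
  dsimp only
  conv_lhs => rw [add_assoc, ← sum_add_distrib]
  simp only [Nat.choose_zero_right, pow_zero]
  congr 1
  apply sum_congr rfl
  intro p _
  have hp : (M + 1 + (p.1 + 1)).choose (p.1 + 1)
      = (M + 1 + p.1).choose p.1 + (M + 1 + p.1).choose (p.1 + 1) := by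
    have : M + 1 + (p.1 + 1) = (M + 1 + p.1) + 1 := by omega
    rw [this, Nat.choose_succ_succ]
  have hq : M + (p.1 + 1) = M + 1 + p.1 := by omega
  rw [hp, hq]
  push_cast
  ring

lemma Tstep (M n r : ℕ) : Tsum (M + 1) n r = Tsum M n r := by
  cases r with
  | zero => simp [Tsum]
  | succ s => rw [claim1, claim2]

lemma Tsum_eq (M n r : ℕ) : Tsum M n r = Tsum 0 n r := by
  induction M with
  | zero => rfl
  | succ M ih => rw [Tstep, ih]

lemma altsum (n r : ℕ) :
    ∑ k ∈ range (r + 1), (-1 : ℤ) ^ k * ((n + 1).choose k : ℤ) = (-1) ^ r * (n.choose r : ℤ) := by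
  induction r with
  | zero => simp
  | succ r ih =>
    rw [sum_range_succ, ih, Nat.choose_succ_succ]
    push_cast
    ring

lemma T0 (n r : ℕ) : Tsum 0 (n + 1) r = (n.choose r : ℤ) := by
  have h1 : Tsum 0 (n + 1) r = ∑ p ∈ antidiagonal r, (-1 : ℤ) ^ p.1 * ((n + 1).choose p.2 : ℤ) := by
    unfold Tsum
    apply sum_congr rfl
    intro p _
    simp
  have h2 : ∀ p ∈ antidiagonal r, (-1 : ℤ) ^ p.1 * ((n + 1).choose p.2 : ℤ)
      = (-1) ^ r * ((-1 : ℤ) ^ p.2 * ((n + 1).choose p.2 : ℤ)) := by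
    intro p hp
    have := mem_antidiagonal.mp hp
    have : (-1 : ℤ) ^ p.1 * (-1 : ℤ) ^ p.2 = (-1) ^ r := by
      rw [← pow_add, this]
    calc (-1 : ℤ) ^ p.1 * ((n + 1).choose p.2 : ℤ)
        = ((-1 : ℤ) ^ p.1 * (-1 : ℤ) ^ p.2) * ((-1 : ℤ) ^ p.2 * ((n + 1).choose p.2 : ℤ)) := by
          rw [← mul_assoc, mul_assoc ((-1 : ℤ) ^ p.1) ((-1 : ℤ) ^ p.2) ((-1 : ℤ) ^ p.2),
            ← pow_add, ← two_mul, pow_mul]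
          norm_num
      _ = (-1) ^ r * ((-1 : ℤ) ^ p.2 * ((n + 1).choose p.2 : ℤ)) := by rw [this]
  rw [h1, sum_congr rfl h2, ← mul_sum]
  have h3 : ∑ p ∈ antidiagonal r, (-1 : ℤ) ^ p.2 * ((n + 1).choose p.2 : ℤ)
      = ∑ p ∈ antidiagonal r, (-1 : ℤ) ^ p.1 * ((n + 1).choose p.1 : ℤ) := by
    rw [← sum_antidiagonal_swap (f := fun p => (-1 : ℤ) ^ p.1 * ((n + 1).choose p.1 : ℤ))]
    rfl
  rw [h3, sum_antidiagonal_eq_sum_range_succ (f := fun k _ => (-1 : ℤ) ^ k * ((n + 1).choose k : ℤ)),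
    altsum, ← mul_assoc, ← pow_add]
  simp [pow_mul]

lemma Tsum_range (M n r : ℕ) : Tsum M n r
    = ∑ k ∈ range (r + 1), (-1 : ℤ) ^ k * ((M + k).choose k : ℤ) * ((M + n).choose (r - k) : ℤ) :=
  sum_antidiagonal_eq_sum_range_succ
    (fun i j => (-1 : ℤ) ^ i * ((M + i).choose i : ℤ) * ((M + n).choose j : ℤ)) r

lemma Tsum_val (M s r : ℕ) : Tsum M (2 * (s + 1)) r = ((2 * s + 1).choose r : ℤ) := by
  rw [Tsum_eq, show 2 * (s + 1) = (2 * s + 1) + 1 from by omega, T0]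

lemma inner_zero (M : ℕ) :
    ∑ k ∈ range 1, (-1 : ℤ) ^ k *
      (((M + k).choose M : ℤ) + (if k = 0 then 0 else ((M + (k - 1)).choose M : ℤ))) *
      ((M + 2 * 0).choose (0 - k) : ℤ) = 1 := by
  simp

lemma inner_succ (M s : ℕ) :
    ∑ k ∈ range (s + 1 + 1), (-1 : ℤ) ^ k *
      (((M + k).choose M : ℤ) + (if k = 0 then 0 else ((M + (k - 1)).choose M : ℤ))) *
      ((M + 2 * (s + 1)).choose ((s + 1) - k) : ℤ) = 0 := by
  have hsymm : ∀ k : ℕ, ((M + k).choose M : ℤ) = ((M + k).choose k : ℤ) := by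
    intro k
    congr 1
    have h := Nat.choose_symm (Nat.le_add_left k M)
    rwa [Nat.add_sub_cancel] at h
  have hsplit : ∀ k ∈ range (s + 1 + 1), (-1 : ℤ) ^ k *
      (((M + k).choose M : ℤ) + (if k = 0 then 0 else ((M + (k - 1)).choose M : ℤ))) *
      ((M + 2 * (s + 1)).choose ((s + 1) - k) : ℤ)
      = (-1 : ℤ) ^ k * ((M + k).choose k : ℤ) * ((M + 2 * (s + 1)).choose ((s + 1) - k) : ℤ)
        + (-1 : ℤ) ^ k * (if k = 0 then 0 else ((M + (k - 1)).choose M : ℤ)) *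
          ((M + 2 * (s + 1)).choose ((s + 1) - k) : ℤ) := by
    intro k _
    rw [← hsymm]
    ring
  rw [sum_congr rfl hsplit, sum_add_distrib, ← Tsum_range]
  have hS2 : ∑ k ∈ range (s + 1 + 1), (-1 : ℤ) ^ k *
      (if k = 0 then 0 else ((M + (k - 1)).choose M : ℤ)) *
      ((M + 2 * (s + 1)).choose ((s + 1) - k) : ℤ) = - Tsum M (2 * (s + 1)) s := by
    rw [sum_range_succ', Tsum_range]
    norm_num
    rw [← Finset.sum_neg_distrib]
    apply sum_congr rfl
    intro k _
    rw [Nat.succ_sub_succ, hsymm]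
    ring
  rw [hS2, Tsum_val, Tsum_val]
  have : (2 * s + 1).choose (s + 1) = (2 * s + 1).choose s := by
    conv_lhs => rw [show s + 1 = 2 * s + 1 - s from by omega]
    exact Nat.choose_symm (by omega)
  rw [this]
  ring

lemma triangle (N : ℕ) (f : ℕ → ℕ → ℤ) (h0 : ∀ k j, N ≤ k + j → f k j = 0) :
    ∑ k ∈ range N, ∑ j ∈ range N, f k j
      = ∑ l ∈ range N, ∑ p ∈ antidiagonal l, f p.1 p.2 := by
  rw [← Finset.sum_product']
  rw [← Finset.sum_biUnion (by
    intro x _ y _ hxy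
    apply Finset.disjoint_left.mpr
    intro p hp hq
    exact hxy ((mem_antidiagonal.mp hp).symm.trans (mem_antidiagonal.mp hq)))]
  symm
  apply Finset.sum_subset
  · intro p hp
    obtain ⟨l, hl, hpl⟩ := Finset.mem_biUnion.mp hp
    have h1 := mem_antidiagonal.mp hpl
    have h2 := mem_range.mp hl
    exact Finset.mem_product.mpr ⟨mem_range.mpr (by omega), mem_range.mpr (by omega)⟩
  · intro p _ hp
    by_cases h : p.1 + p.2 < N
    · exact absurd (Finset.mem_biUnion.mpr ⟨p.1 + p.2, mem_range.mpr h,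
        mem_antidiagonal.mpr rfl⟩) hp
    · exact h0 p.1 p.2 (by omega)

/-- Sequence form of Corollary 3.8: if `a : ℕ → ℤ` vanishes for `n ≥ N` and
`b(n) = ∑_{k≥0} C(m+2n+2k, k) a(n+k)` (a finite sum, here truncated at `N`
which contains all nonzero terms), then for every `n`,
`a(n) = ∑_{k≥0} (−1)^k (C(m+2n+k, m+2n) + C(m+2n+k−1, m+2n)) b(n+k)`. -/
theorem sequence_inversion (m : ℕ) (a b : ℕ → ℤ) (N : ℕ)
    (hN : ∀ n : ℕ, N ≤ n → a n = 0)
    (hb : ∀ n : ℕ, b n = ∑ k ∈ Finset.range N,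
      (Nat.choose (m + 2 * n + 2 * k) k : ℤ) * a (n + k)) :
    ∀ n : ℕ, a n = ∑ k ∈ Finset.range N,
      (-1 : ℤ) ^ k *
        (intChoose ((m : ℤ) + 2 * n + k) ((m : ℤ) + 2 * n) +
         intChoose ((m : ℤ) + 2 * n + k - 1) ((m : ℤ) + 2 * n)) * b (n + k) := by
  intro n
  rcases Nat.eq_zero_or_pos N with hN0 | hN0
  · subst hN0
    simpa using hN n (Nat.zero_le n)
  symm
  set M := m + 2 * n with hM
  -- the coefficient function
  set f : ℕ → ℕ → ℤ := fun k j =>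
    (-1 : ℤ) ^ k *
      (((M + k).choose M : ℤ) + (if k = 0 then 0 else ((M + (k - 1)).choose M : ℤ))) *
      ((M + 2 * k + 2 * j).choose j : ℤ) * a (n + k + j) with hf
  have hic1 : ∀ k : ℕ, intChoose ((m : ℤ) + 2 * n + k) ((m : ℤ) + 2 * n)
      = ((M + k).choose M : ℤ) := by
    intro k
    have h1 : (m : ℤ) + 2 * n + k = ((M + k : ℕ) : ℤ) := by rw [hM]; push_cast; ring
    have h2 : (m : ℤ) + 2 * n = ((M : ℕ) : ℤ) := by rw [hM]; push_cast; ring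
    rw [h1, h2, intChoose_natCast_s10]
  have hic2 : ∀ k : ℕ, intChoose ((m : ℤ) + 2 * n + k - 1) ((m : ℤ) + 2 * n)
      = (if k = 0 then 0 else ((M + (k - 1)).choose M : ℤ)) := by
    intro k
    have h2 : (m : ℤ) + 2 * n = ((M : ℕ) : ℤ) := by rw [hM]; push_cast; ring
    rcases Nat.eq_zero_or_pos k with hk | hk
    · subst hk
      rw [if_pos rfl]
      rcases Nat.eq_zero_or_pos M with hm | hm
      · have hm0 : m = 0 := by omega
        have hn0 : n = 0 := by omega
        subst hm0; subst hn0
        norm_num [intChoose]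
      · have h1 : (m : ℤ) + 2 * n + (0 : ℕ) - 1 = ((M - 1 : ℕ) : ℤ) := by
          rw [hM] at *; omega
        rw [h1, h2, intChoose_natCast_s10,
          Nat.choose_eq_zero_of_lt (by omega : M - 1 < M)]
        rfl
    · have h1 : (m : ℤ) + 2 * n + k - 1 = ((M + (k - 1) : ℕ) : ℤ) := by
        rw [hM] at *; omega
      rw [h1, h2, if_neg (by omega), intChoose_natCast_s10]
  calc ∑ k ∈ Finset.range N, (-1 : ℤ) ^ k *
        (intChoose ((m : ℤ) + 2 * n + k) ((m : ℤ) + 2 * n) +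
         intChoose ((m : ℤ) + 2 * n + k - 1) ((m : ℤ) + 2 * n)) * b (n + k)
      = ∑ k ∈ range N, ∑ j ∈ range N, f k j := by
        apply sum_congr rfl
        intro k _
        rw [hic1, hic2, hb (n + k), mul_sum]
        apply sum_congr rfl
        intro j _
        have e1 : m + 2 * (n + k) + 2 * j = M + 2 * k + 2 * j := by rw [hM]; ring
        rw [e1, hf]
        ring
    _ = ∑ l ∈ range N, ∑ p ∈ antidiagonal l, f p.1 p.2 := by
        apply triangle
        intro k j h
        simp only [hf]
        have : a (n + k + j) = 0 := hN _ (by omega)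
        rw [this, mul_zero]
    _ = ∑ l ∈ range N, (if l = 0 then 1 else 0) * a (n + l) := by
        apply sum_congr rfl
        intro l _
        rw [sum_antidiagonal_eq_sum_range_succ (f := fun k j => f k j) l]
        have hterm : ∀ k ∈ range (l + 1), f k (l - k)
            = ((-1 : ℤ) ^ k *
              (((M + k).choose M : ℤ) + (if k = 0 then 0 else ((M + (k - 1)).choose M : ℤ))) *
              ((M + 2 * l).choose (l - k) : ℤ)) * a (n + l) := by
          intro k hk
          have hkl : k ≤ l := by have := mem_range.mp hk; omega
          have e1 : M + 2 * k + 2 * (l - k) = M + 2 * l := by omega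
          have e2 : n + k + (l - k) = n + l := by omega
          rw [hf]
          dsimp only
          rw [e1, e2]
        rw [sum_congr rfl hterm, ← sum_mul]
        congr 1
        cases l with
        | zero => exact inner_zero M
        | succ s => rw [inner_succ M s]; rfl
    _ = ∑ l ∈ range N, (if l = 0 then a (n + l) else 0) := by
        apply sum_congr rfl
        intro l _
        split <;> simp
    _ = a n := by
        rw [Finset.sum_ite_eq' (range N) 0 (fun l => a (n + l))]
        rw [if_pos (mem_range.mpr hN0), Nat.add_zero]
end
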